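/- Under hypotheses (H1) and (H3), the function z = (x₁,x₂) ↦ x₂ exp(a(1,0)·z) − E_z(S₂(τ) exp(a(1,0)·S(τ)); τ < ∞) is well defined (the expectation converges absolutely) and nonnegative at every z ∈ ℕ*×ℕ*. -/

import Mathlib

open scoped ENNReal Classical
open Filter

namespace KRWQ

/-- `n`-step transition probabilities of the homogeneous random walk with step
distribution `μ` on an abelian group `G`: `nstep μ n z z' = P_z(S(n) = z')`. -/
noncomputable def nstep {G : Type*} [AddCommGroup G] (μ : G → ℝ≥0∞) : ℕ → G → G → ℝ≥0∞
  | 0, z, z' => if z' = z then 1 else 0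
  | n + 1, z, z' => ∑' w : G, nstep μ n z w * μ (z' - w)

/-- `n`-step transition probabilities of the random walk killed outside the set `A`:
for `z ∈ A`, `nstepK μ A n z z' = P_z(S(n) = z', S(k) ∈ A for all k ≤ n)`. -/
noncomputable def nstepK {G : Type*} [AddCommGroup G] (μ : G → ℝ≥0∞) (A : Set G) :
    ℕ → G → G → ℝ≥0∞
  | 0, z, z' => if z' = z then 1 else 0
  | n + 1, z, z' => A.indicator (fun u => ∑' w : G, nstepK μ A n z w * μ (u - w)) z'

/-- Green function of the homogeneous random walk. -/
noncomputable def green {G : Type*} [AddCommGroup G] (μ : G → ℝ≥0∞) (z z' : G) : ℝ≥0∞ :=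
  ∑' n : ℕ, nstep μ n z z'

/-- Green function of the random walk killed outside `A`. -/
noncomputable def greenK {G : Type*} [AddCommGroup G] (μ : G → ℝ≥0∞) (A : Set G)
    (z z' : G) : ℝ≥0∞ :=
  ∑' n : ℕ, nstepK μ A n z z'

/-- Distribution of the exit position: for `z ∈ A`, `exitK μ A z w` is the probability
that the walk started at `z` first exits `A` (in finite time) at the point `w`,
i.e. `P_z(τ < ∞, S(τ) = w)` where `τ = inf{n ≥ 0 : S(n) ∉ A}`. -/
noncomputable def exitK {G : Type*} [AddCommGroup G] (μ : G → ℝ≥0∞) (A : Set G)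
    (z w : G) : ℝ≥0∞ :=
  Aᶜ.indicator (fun u => ∑' n : ℕ, ∑' v : G, nstepK μ A n z v * μ (u - v)) w

/-- `Eexit μ A z f = E_z(f(S(τ)); τ < ∞)` for a nonnegative `f`,
where `τ` is the first exit time from `A` and `z ∈ A`. -/
noncomputable def Eexit {G : Type*} [AddCommGroup G] (μ : G → ℝ≥0∞) (A : Set G) (z : G)
    (f : G → ℝ≥0∞) : ℝ≥0∞ :=
  ∑' w : G, exitK μ A z w * f w

/-- `EexitR μ A z f = E_z(f(S(τ)); τ < ∞)` for a signed `f` (real-valued version). -/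
noncomputable def EexitR {G : Type*} [AddCommGroup G] (μ : G → ℝ≥0∞) (A : Set G) (z : G)
    (f : G → ℝ) : ℝ :=
  ∑' w : G, (exitK μ A z w).toReal * f w

/-- Euclidean scalar product on `ℝ²`. -/
def dot (a b : ℝ × ℝ) : ℝ := a.1 * b.1 + a.2 * b.2

/-- Embedding of the lattice `ℤ²` into `ℝ²`. -/
def toR (z : ℤ × ℤ) : ℝ × ℝ := ((z.1 : ℝ), (z.2 : ℝ))

/-- Euclidean norm on `ℝ²`. -/
noncomputable def norE (p : ℝ × ℝ) : ℝ := Real.sqrt (p.1 ^ 2 + p.2 ^ 2)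

/-- Euclidean norm of a lattice point. -/
noncomputable def normZ (z : ℤ × ℤ) : ℝ := norE (toR z)

/-- The open quadrant `ℕ* × ℕ*`. -/
def quadrant : Set (ℤ × ℤ) := {z | 0 < z.1 ∧ 0 < z.2}

/-- The half plane `ℤ × ℕ*` (state space of the local process `Z¹₊`). -/
def upperHalf : Set (ℤ × ℤ) := {z | 0 < z.2}

/-- The half plane `ℕ* × ℤ` (state space of the local process `Z²₊`). -/
def rightHalf : Set (ℤ × ℤ) := {z | 0 < z.1}

/-- The jump generating function `φ(a) = ∑_z μ(z) exp(a·z)`. -/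
noncomputable def jumpGF (μ : ℤ × ℤ → ℝ≥0∞) (a : ℝ × ℝ) : ℝ≥0∞ :=
  ∑' z : ℤ × ℤ, μ z * ENNReal.ofReal (Real.exp (dot a (toR z)))

/-- Hypothesis (H1): the homogeneous random walk `S` with step distribution `μ`
is irreducible, and its mean `m = ∑_z z μ(z)` exists and is nonzero. -/
def H1 (μ : ℤ × ℤ → ℝ≥0∞) : Prop :=
  (∀ z z' : ℤ × ℤ, ∃ n : ℕ, 0 < nstep μ n z z') ∧
    Summable (fun z : ℤ × ℤ => ((z.1 : ℝ)) * (μ z).toReal) ∧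
    Summable (fun z : ℤ × ℤ => ((z.2 : ℝ)) * (μ z).toReal) ∧
    ((∑' z : ℤ × ℤ, ((z.1 : ℝ)) * (μ z).toReal, ∑' z : ℤ × ℤ, ((z.2 : ℝ)) * (μ z).toReal)
      ≠ ((0 : ℝ), (0 : ℝ)))

/-- Hypothesis (H2): the random walk killed outside the quadrant is irreducible
on the quadrant. -/
def H2 (μ : ℤ × ℤ → ℝ≥0∞) : Prop :=
  ∀ z ∈ quadrant, ∀ z' ∈ quadrant, ∃ n : ℕ, 0 < nstepK μ quadrant n z z'

/-- Hypothesis (H3): the jump generating function is finite everywhere on `ℝ²`. -/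
def H3 (μ : ℤ × ℤ → ℝ≥0∞) : Prop := ∀ a : ℝ × ℝ, jumpGF μ a < ⊤

/-- `d` is a greatest common divisor of the set `K` of natural numbers. -/
def IsGcdOfSet (K : Set ℕ) (d : ℕ) : Prop :=
  (∀ k ∈ K, d ∣ k) ∧ ∀ c : ℕ, (∀ k ∈ K, c ∣ k) → c ∣ d

/-- First marginal of `μ`: step distribution of the coordinate walk `S₁`. -/
noncomputable def marg1 (μ : ℤ × ℤ → ℝ≥0∞) : ℤ → ℝ≥0∞ := fun x => ∑' y : ℤ, μ (x, y)

/-- Second marginal of `μ`: step distribution of the coordinate walk `S₂`. -/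
noncomputable def marg2 (μ : ℤ × ℤ → ℝ≥0∞) : ℤ → ℝ≥0∞ := fun y => ∑' x : ℤ, μ (x, y)

/-- Hypothesis (H4): the coordinate random walks `S₁` and `S₂` are aperiodic on `ℤ`. -/
def H4 (μ : ℤ × ℤ → ℝ≥0∞) : Prop :=
  IsGcdOfSet {k : ℕ | 0 < k ∧ 0 < nstep (marg1 μ) k (0 : ℤ) 0} 1 ∧
    IsGcdOfSet {k : ℕ | 0 < k ∧ 0 < nstep (marg2 μ) k (0 : ℤ) 0} 1

/-- The set `𝒮²₊` of unit vectors of `ℝ²` with nonnegative coordinates. -/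
def Spos : Set (ℝ × ℝ) := {q | 0 ≤ q.1 ∧ 0 ≤ q.2 ∧ norE q = 1}

/-- `aOf` is the map `q ↦ a(q)`, the inverse of the homeomorphism
`a ↦ ∇φ(a)/|∇φ(a)|` from `∂D` onto the unit circle (extended to all nonzero `q` by
homogeneity).  Equivalently, `a(q)` is the unique point of `D = {a : φ(a) ≤ 1}` where
the linear functional `a ↦ a·q` attains its maximum over `D`, and it lies on `∂D`. -/
def IsDirMap (μ : ℤ × ℤ → ℝ≥0∞) (aOf : ℝ × ℝ → ℝ × ℝ) : Prop :=
  ∀ q : ℝ × ℝ, q ≠ 0 →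
    jumpGF μ (aOf q) = 1 ∧
      ∀ a : ℝ × ℝ, jumpGF μ a ≤ 1 → a ≠ aOf q → dot a q < dot (aOf q) q

/-- The arc `Γ₊ = {a ∈ ∂D : q(a) ∈ 𝒮²₊}`. -/
def GammaPlus (aOf : ℝ × ℝ → ℝ × ℝ) : Set (ℝ × ℝ) := {a | ∃ q ∈ Spos, a = aOf q}

/-- The integrand appearing in the boundary term of `h_a`. -/
noncomputable def haIntegrand (aOf : ℝ × ℝ → ℝ × ℝ) (a : ℝ × ℝ) (w : ℤ × ℤ) : ℝ :=
  if a = aOf ((0 : ℝ), (1 : ℝ)) then (w.1 : ℝ) * Real.exp (dot a (toR w))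
  else if a = aOf ((1 : ℝ), (0 : ℝ)) then (w.2 : ℝ) * Real.exp (dot a (toR w))
  else Real.exp (dot a (toR w))

/-- The leading term of `h_a`. -/
noncomputable def haLead (aOf : ℝ × ℝ → ℝ × ℝ) (a : ℝ × ℝ) (z : ℤ × ℤ) : ℝ :=
  if a = aOf ((0 : ℝ), (1 : ℝ)) then (z.1 : ℝ) * Real.exp (dot a (toR z))
  else if a = aOf ((1 : ℝ), (0 : ℝ)) then (z.2 : ℝ) * Real.exp (dot a (toR z))
  else Real.exp (dot a (toR z))

/-- The harmonic function `h_a` of the killed random walk, defined by (1.3). -/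
noncomputable def haFun (μ : ℤ × ℤ → ℝ≥0∞) (aOf : ℝ × ℝ → ℝ × ℝ) (a : ℝ × ℝ)
    (z : ℤ × ℤ) : ℝ :=
  haLead aOf a z - EexitR μ quadrant z (haIntegrand aOf a)

/-- Expectation over the event `{τ = τ₁ < τ₂}`, i.e. the walk exits the quadrant
through the boundary `{w : w₁ ≤ 0, w₂ > 0}`. -/
noncomputable def Eexit1 (μ : ℤ × ℤ → ℝ≥0∞) (z : ℤ × ℤ) (f : ℤ × ℤ → ℝ≥0∞) : ℝ≥0∞ :=
  ∑' w : ℤ × ℤ, (if w.1 ≤ 0 ∧ 0 < w.2 then exitK μ quadrant z w * f w else 0)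

/-- The support function `w ↦ a(w)·w = max_{a ∈ D} a·w`, with the convention that it
vanishes at `w = 0`. -/
noncomputable def support (aOf : ℝ × ℝ → ℝ × ℝ) (w : ℝ × ℝ) : ℝ :=
  if w = 0 then 0 else dot (aOf w) w

/-- The function `λ_ε(q,w) = a(w)·w + a(q-w)·(q-w) - ε|w|`. -/
noncomputable def lamEps (aOf : ℝ × ℝ → ℝ × ℝ) (ε : ℝ) (q w : ℝ × ℝ) : ℝ :=
  support aOf w + support aOf (q - w) - ε * norE w

/-- The principal part `Ξ^q_δ(z,zₙ)` of the renewal equation. -/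
noncomputable def XiQ (μ : ℤ × ℤ → ℝ≥0∞) (q : ℝ × ℝ) (δ : ℝ) (z zn : ℤ × ℤ) : ℝ :=
  if q = ((1 : ℝ), (0 : ℝ)) then
    (greenK μ upperHalf z zn).toReal -
      ∑' w : ℤ × ℤ, (exitK μ quadrant z w).toReal *
        (if w.1 ≤ 0 ∧ 0 < w.2 ∧ normZ w < δ * normZ zn then
          (greenK μ upperHalf w zn).toReal else 0)
  else if q = ((0 : ℝ), (1 : ℝ)) then
    (greenK μ rightHalf z zn).toReal -
      ∑' w : ℤ × ℤ, (exitK μ quadrant z w).toReal *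
        (if w.2 ≤ 0 ∧ 0 < w.1 ∧ normZ w < δ * normZ zn then
          (greenK μ rightHalf w zn).toReal else 0)
  else
    (green μ z zn).toReal -
      ∑' w : ℤ × ℤ, (exitK μ quadrant z w).toReal *
        (if normZ w < δ * normZ zn then (green μ w zn).toReal else 0)

/-!
Write `a = a(1,0)` and `e₂ = (0,1)`. Since `a` is the unique maximiser of `b ↦ b·(1,0)` on
`D`, every `a + t e₂` with `t ≠ 0` lies outside `D`, so `t ↦ φ(a + t e₂)` has its minimum `1`
at `t = 0`. Hence the `a`-tilted step law `μ(s) e^{a·s}` has zero vertical mean, and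
`h(w) = w₂ e^{a·w}` is harmonic for the walk; moreover `φ(a - e₂) > 1`.

For a real function `h` that is superharmonic and nonnegative on the quadrant, running the
killed walk step by step gives `E_z(h⁺(S τ); τ < ∞) ≤ h(z) + E_z(h⁻(S τ); τ < ∞)`. For
`h(w) = w₂ e^{a·w}` this is the claim once the negative part is known to be integrable. That
follows from the same inequality for `Φ(w) = e^{a·w} (K - e^{-w₂} + e^{-2 w₂} / K) ≥ w₂⁻ e^{a·w}`:
in `Φ = K e^{a·w} - e^{(a - e₂)·w} + e^{(a - 2e₂)·w} / K` the middle term gains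
`(φ(a - e₂) - 1) e^{(a - e₂)·w}` in one step, which beats the loss of the last term on the upper
half-plane once `K` is large.
-/

open Finset

section Kernel

variable {G : Type*} [AddCommGroup G] {μ : G → ℝ≥0∞} {A : Set G} {z : G}

lemma nstepK_eq_zero_of_notMem (hz : z ∈ A) {v : G} (hv : v ∉ A) (n : ℕ) :
    nstepK μ A n z v = 0 := by
  cases n with
  | zero => simp [nstepK, show v ≠ z from fun h => hv (h ▸ hz)]
  | succ n => exact Set.indicator_of_notMem hv _

lemma tsum_nstepK_zero_mul (f : G → ℝ≥0∞) : ∑' v, nstepK μ A 0 z v * f v = f z := by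
  simp [nstepK]

lemma tsum_nstepK_succ_mul (n : ℕ) (f : G → ℝ≥0∞) :
    ∑' w, nstepK μ A (n + 1) z w * f w =
      ∑' v, nstepK μ A n z v * ∑' w, A.indicator (fun w => μ (w - v) * f w) w := by
  simp_rw [← ENNReal.tsum_mul_left]
  rw [ENNReal.tsum_comm]
  refine tsum_congr fun w => ?_
  by_cases hw : w ∈ A
  · simp [nstepK, hw, ← ENNReal.tsum_mul_right, mul_assoc]
  · simp [nstepK, hw]

lemma Eexit_eq_tsum_nstepK (f : G → ℝ≥0∞) :
    Eexit μ A z f =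
      ∑' n, ∑' v, nstepK μ A n z v * ∑' w, Aᶜ.indicator (fun w => μ (w - v) * f w) w := by
  simp_rw [← ENNReal.tsum_mul_left]
  conv_rhs => enter [1, n]; rw [ENNReal.tsum_comm]
  rw [Eexit, ENNReal.tsum_comm]
  refine tsum_congr fun w => ?_
  by_cases hw : w ∈ A
  · simp [exitK, hw]
  · simp [exitK, hw, ← ENNReal.tsum_mul_right, mul_assoc]

lemma tsum_nstepK_succ_mul_add_exit (n : ℕ) (f : G → ℝ≥0∞) :
    ∑' w, nstepK μ A (n + 1) z w * f w
        + ∑' v, nstepK μ A n z v * ∑' w, Aᶜ.indicator (fun w => μ (w - v) * f w) w =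
      ∑' v, nstepK μ A n z v * ∑' w, μ (w - v) * f w := by
  rw [tsum_nstepK_succ_mul, ← ENNReal.tsum_add]
  refine tsum_congr fun v => ?_
  rw [← mul_add, ← ENNReal.tsum_add]
  simp_rw [Set.indicator_self_add_compl_apply]

theorem Eexit_le_add_Eexit (hz : z ∈ A) {f g : G → ℝ≥0∞} (hg : ∀ w ∈ A, g w = 0)
    (hfg : ∀ v ∈ A, ∑' w, μ (w - v) * f w ≤ f v + ∑' w, μ (w - v) * g w) :
    Eexit μ A z f ≤ f z + Eexit μ A z g := by
  -- `M n = E_z(f (S n); n < τ)` and `X f n = E_z(f (S (n + 1)); τ = n + 1)`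
  set M : ℕ → ℝ≥0∞ := fun n => ∑' v, nstepK μ A n z v * f v
  set X : (G → ℝ≥0∞) → ℕ → ℝ≥0∞ := fun f n =>
    ∑' v, nstepK μ A n z v * ∑' w, Aᶜ.indicator (fun w => μ (w - v) * f w) w
  have hXg (n : ℕ) : X g n = ∑' v, nstepK μ A n z v * ∑' w, μ (w - v) * g w := by
    refine tsum_congr fun v => congrArg _ (tsum_congr fun w => ?_)
    by_cases hw : w ∈ A <;> simp [hw, hg]
  have hstep (n : ℕ) : M (n + 1) + X f n ≤ M n + X g n := by
    rw [tsum_nstepK_succ_mul_add_exit, hXg, ← ENNReal.tsum_add]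
    refine ENNReal.tsum_le_tsum fun v => ?_
    rw [← mul_add]
    by_cases hv : v ∈ A
    · exact mul_le_mul_right (hfg v hv) _
    · simp [nstepK_eq_zero_of_notMem hz hv]
  have hpartial (n : ℕ) : ∑ k ∈ range n, X f k + M n ≤ f z + ∑ k ∈ range n, X g k := by
    induction n with
    | zero => simp [M, tsum_nstepK_zero_mul]
    | succ n ih =>
      calc ∑ k ∈ range (n + 1), X f k + M (n + 1)
          = ∑ k ∈ range n, X f k + (M (n + 1) + X f n) := by rw [sum_range_succ]; ring
        _ ≤ ∑ k ∈ range n, X f k + (M n + X g n) := add_le_add le_rfl (hstep n)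
        _ = (∑ k ∈ range n, X f k + M n) + X g n := by ring
        _ ≤ f z + ∑ k ∈ range n, X g k + X g n := by gcongr
        _ = f z + ∑ k ∈ range (n + 1), X g k := by rw [sum_range_succ]; ring
  rw [Eexit_eq_tsum_nstepK, Eexit_eq_tsum_nstepK]
  refine ENNReal.tsum_le_of_sum_range_le fun n => ?_
  calc ∑ k ∈ range n, X f k ≤ ∑ k ∈ range n, X f k + M n := le_self_add
    _ ≤ f z + ∑ k ∈ range n, X g k := hpartial n
    _ ≤ f z + ∑' k, X g k := by gcongr; exact ENNReal.sum_le_tsum _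

lemma Eexit_mono {f g : G → ℝ≥0∞} (hfg : ∀ w, f w ≤ g w) : Eexit μ A z f ≤ Eexit μ A z g :=
  ENNReal.tsum_le_tsum fun w => mul_le_mul_right (hfg w) _

end Kernel

section OfReal

variable {ι : Type*} {m : ι → ℝ≥0∞} {h : ι → ℝ}

lemma tsum_mul_ofReal_le_add (hm : ∀ i, m i ≠ ⊤) {c : ℝ}
    (hc : HasSum (fun i => (m i).toReal * h i) c) :
    ∑' i, m i * ENNReal.ofReal (h i) ≤ ENNReal.ofReal c + ∑' i, m i * ENNReal.ofReal (-h i) := by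
  have hmul (x : ℝ) (i : ι) :
      m i * ENNReal.ofReal x = ENNReal.ofReal (max ((m i).toReal * x) 0) := by
    rw [ENNReal.ofReal_max, ENNReal.ofReal_zero, max_eq_left zero_le,
      ENNReal.ofReal_mul ENNReal.toReal_nonneg, ENNReal.ofReal_toReal (hm i)]
  set u := fun i => (m i).toReal * h i
  have habs := hc.summable.abs
  have hpos : Summable fun i => max (u i) 0 :=
    habs.of_nonneg_of_le (fun _ => le_max_right _ _) fun i => max_le (le_abs_self _) (abs_nonneg _)
  have hneg : Summable fun i => max (-u i) 0 :=
    habs.of_nonneg_of_le (fun _ => le_max_right _ _) fun i => max_le (neg_le_abs _) (abs_nonneg _)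
  have hsplit : ∑' i, max (u i) 0 = c + ∑' i, max (-u i) 0 := by
    rw [← hc.tsum_eq, ← hc.summable.tsum_add hneg]
    refine tsum_congr fun i => ?_
    rcases le_total (u i) 0 with hi | hi <;> simp [hi]
  simp_rw [hmul, mul_neg]
  rw [← ENNReal.ofReal_tsum_of_nonneg (fun _ => le_max_right _ _) hpos,
    ← ENNReal.ofReal_tsum_of_nonneg (fun _ => le_max_right _ _) hneg, hsplit]
  exact ENNReal.ofReal_add_le

lemma summable_abs_and_tsum_le {c : ℝ} (hc : 0 ≤ c)
    (hneg : ∑' i, m i * ENNReal.ofReal (-h i) ≠ ⊤)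
    (hle : ∑' i, m i * ENNReal.ofReal (h i) ≤ ENNReal.ofReal c + ∑' i, m i * ENNReal.ofReal (-h i)) :
    Summable (fun i => (m i).toReal * |h i|) ∧ ∑' i, (m i).toReal * h i ≤ c := by
  have hpos : ∑' i, m i * ENNReal.ofReal (h i) ≠ ⊤ :=
    ne_top_of_le_ne_top (ENNReal.add_ne_top.2 ⟨ENNReal.ofReal_ne_top, hneg⟩) hle
  have hasSum_toReal {x : ι → ℝ} (hx : ∑' i, m i * ENNReal.ofReal (x i) ≠ ⊤) :
      HasSum (fun i => (m i).toReal * max (x i) 0) (∑' i, m i * ENNReal.ofReal (x i)).toReal := by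
    rw [ENNReal.tsum_toReal_eq (ENNReal.ne_top_of_tsum_ne_top hx)]
    simpa only [ENNReal.toReal_mul, ENNReal.toReal_ofReal'] using
      (ENNReal.summable_toReal hx).hasSum
  have hP := hasSum_toReal hpos
  have hN := hasSum_toReal hneg
  refine ⟨(hP.add hN).summable.congr fun i => ?_, ?_⟩
  · rcases le_total (h i) 0 with hi | hi <;> simp [hi, abs_of_nonpos, abs_of_nonneg]
  · have hsub := (hP.sub hN).tsum_eq
    have hbound := ENNReal.toReal_mono (ENNReal.add_ne_top.2 ⟨ENNReal.ofReal_ne_top, hneg⟩) hle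
    rw [ENNReal.toReal_add ENNReal.ofReal_ne_top hneg, ENNReal.toReal_ofReal hc] at hbound
    calc ∑' i, (m i).toReal * h i
        = ∑' i, ((m i).toReal * max (h i) 0 - (m i).toReal * max (-h i) 0) := by
          refine tsum_congr fun i => ?_
          rcases le_total (h i) 0 with hi | hi <;> simp [hi]
      _ ≤ c := by linarith

end OfReal

theorem Eexit_ofReal_le {G : Type*} [AddCommGroup G] {μ : G → ℝ≥0∞} {A : Set G} {z : G}
    (hμ : ∀ s, μ s ≠ ⊤) (hz : z ∈ A) {h : G → ℝ} (hh : ∀ w ∈ A, 0 ≤ h w)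
    (hsup : ∀ v ∈ A, ∃ c ≤ h v, HasSum (fun w => (μ (w - v)).toReal * h w) c) :
    Eexit μ A z (fun w => ENNReal.ofReal (h w)) ≤
      ENNReal.ofReal (h z) + Eexit μ A z (fun w => ENNReal.ofReal (-h w)) := by
  refine Eexit_le_add_Eexit hz (fun w hw => ENNReal.ofReal_eq_zero.2 (neg_nonpos.2 (hh w hw)))
    fun v hv => ?_
  obtain ⟨c, hc, hsum⟩ := hsup v hv
  exact (tsum_mul_ofReal_le_add (fun w => hμ _) hsum).trans (by gcongr)

section Laplace

open Real

lemma abs_mul_exp_mul_le {t : ℝ} (ht : |t| ≤ 1) (x : ℝ) :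
    |x * exp (t * x)| ≤ exp (2 * x) + exp (-2 * x) := by
  rw [abs_mul, abs_of_pos (exp_pos _)]
  have hx : |x| ≤ exp |x| := by linarith [add_one_le_exp |x|]
  have htx : exp (t * x) ≤ exp |x| := exp_le_exp.2 <| calc
    t * x ≤ |t| * |x| := (le_abs_self _).trans (abs_mul t x).le
    _ ≤ |x| := mul_le_of_le_one_left (abs_nonneg x) ht
  have hsq : exp |x| * exp |x| ≤ exp (2 * x) + exp (-2 * x) := by
    rw [← exp_add]
    rcases abs_cases x with ⟨hx, -⟩ | ⟨hx, -⟩ <;> rw [hx]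
    · rw [show x + x = 2 * x by ring]; linarith [exp_pos (-2 * x)]
    · rw [show -x + -x = -2 * x by ring]; linarith [exp_pos (2 * x)]
  exact (mul_le_mul hx htx (exp_pos _).le (exp_pos _).le).trans hsq

variable {ι : Type*} {p ξ : ι → ℝ} {L : ℝ → ℝ}

lemma hasSum_mul_eq_zero_of_isMinOn (hp : ∀ i, 0 ≤ p i)
    (hL : ∀ t, HasSum (fun i => p i * exp (t * ξ i)) (L t)) (hmin : IsMinOn L Set.univ 0) :
    HasSum (fun i => p i * ξ i) 0 := by
  have hbound : Summable fun i => p i * (exp (2 * ξ i) + exp (-2 * ξ i)) := by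
    simpa only [mul_add] using ((hL 2).add (hL (-2))).summable
  have hderiv_le (i : ι) (t : ℝ) (ht : t ∈ Set.Ioo (-1 : ℝ) 1) :
      ‖p i * (ξ i * exp (t * ξ i))‖ ≤ p i * (exp (2 * ξ i) + exp (-2 * ξ i)) := by
    rw [Real.norm_eq_abs, abs_mul, abs_of_nonneg (hp i)]
    exact mul_le_mul_of_nonneg_left (abs_mul_exp_mul_le (abs_le.2 ⟨ht.1.le, ht.2.le⟩) _) (hp i)
  have hderiv : HasDerivAt L (∑' i, p i * (ξ i * exp (0 * ξ i))) 0 := by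
    have := hasDerivAt_tsum_of_isPreconnected (g := fun i t => p i * exp (t * ξ i))
      (g' := fun i t => p i * (ξ i * exp (t * ξ i))) hbound isOpen_Ioo isPreconnected_Ioo
      (fun i t _ => by
        have := ((hasDerivAt_id t).mul_const (ξ i)).exp.const_mul (p i)
        simp only [id, one_mul] at this
        rwa [mul_comm (exp _) (ξ i)] at this)
      hderiv_le (y₀ := 0) (y := 0) (by norm_num) (hL 0).summable (by norm_num)
    rwa [show L = fun t => ∑' i, p i * exp (t * ξ i) from funext fun t => (hL t).tsum_eq.symm]
  have hsum : Summable fun i => p i * ξ i :=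
    hbound.of_norm_bounded fun i => by simpa using hderiv_le i 0 (by norm_num)
  have hzero := (hmin.isLocalMin Filter.univ_mem).hasDerivAt_eq_zero hderiv
  simp only [zero_mul, exp_zero, mul_one] at hzero
  exact hzero ▸ hsum.hasSum

lemma hasSum_mul_add (hp : HasSum p 1) (hξ : HasSum (fun i => p i * ξ i) 0) (y : ℝ) :
    HasSum (fun i => p i * (y + ξ i)) y := by
  simpa [mul_add, mul_comm] using (hp.mul_left y).add hξ

noncomputable def barrier (K u : ℝ) : ℝ := K - exp (-u) + exp (-2 * u) / K

lemma exp_neg_le_barrier {K : ℝ} (hK : 0 < K) (u : ℝ) : exp (-u) ≤ barrier K u := by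
  have : barrier K u - exp (-u) = (exp (-u) - K) ^ 2 / K := by
    rw [barrier, show -2 * u = -u + -u by ring, exp_add]
    field_simp
    ring
  linarith [show 0 ≤ (exp (-u) - K) ^ 2 / K by positivity]

lemma barrier_nonneg {K : ℝ} (hK : 0 < K) (u : ℝ) : 0 ≤ barrier K u :=
  (exp_pos _).le.trans (exp_neg_le_barrier hK u)

lemma neg_le_barrier {K : ℝ} (hK : 0 < K) (u : ℝ) : -u ≤ barrier K u :=
  (show -u ≤ exp (-u) by linarith [add_one_le_exp (-u)]).trans (exp_neg_le_barrier hK u)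

lemma hasSum_mul_barrier (hL : ∀ t, HasSum (fun i => p i * exp (t * ξ i)) (L t))
    (hL0 : L 0 = 1) (K y : ℝ) :
    HasSum (fun i => p i * barrier K (y + ξ i))
      (K - exp (-y) * L (-1) + exp (-2 * y) / K * L (-2)) := by
  have hp : HasSum p 1 := by simpa [hL0] using hL 0
  have hexpand (i : ι) : p i * barrier K (y + ξ i) = K * p i - exp (-y) * (p i * exp (-1 * ξ i))
      + exp (-2 * y) / K * (p i * exp (-2 * ξ i)) := by
    rw [barrier, show -(y + ξ i) = -y + -1 * ξ i by ring,
      show -2 * (y + ξ i) = -2 * y + -2 * ξ i by ring, exp_add, exp_add]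
    ring
  simp_rw [hexpand]
  have := ((hp.mul_left K).sub ((hL (-1)).mul_left (exp (-y)))).add
    ((hL (-2)).mul_left (exp (-2 * y) / K))
  rwa [mul_one] at this

lemma exists_barrier_superharmonic (hL : ∀ t, HasSum (fun i => p i * exp (t * ξ i)) (L t))
    (hL0 : L 0 = 1) (hL1 : 1 < L (-1)) (hL2 : 0 ≤ L (-2)) :
    ∃ K > 0, ∀ y, 0 ≤ y → ∃ S ≤ barrier K y, HasSum (fun i => p i * barrier K (y + ξ i)) S := by
  set K := L (-2) / (L (-1) - 1) + 1
  have hK : 0 < K := by positivity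
  have hKL : L (-2) ≤ K * (L (-1) - 1) := by
    rw [add_mul, div_mul_cancel₀ _ (by linarith)]
    linarith
  refine ⟨K, hK, fun y hy => ⟨_, ?_, hasSum_mul_barrier hL hL0 K y⟩⟩
  have hey : exp (-y) ≤ 1 := exp_le_one_iff.2 (by linarith)
  have he2 : exp (-2 * y) = exp (-y) * exp (-y) := by rw [← exp_add]; ring_nf
  have hkey : exp (-2 * y) / K * L (-2) ≤ exp (-y) * (L (-1) - 1) := by
    have he := (exp_pos (-y)).le
    rw [div_mul_eq_mul_div, div_le_iff₀ hK, he2]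
    calc exp (-y) * exp (-y) * L (-2) ≤ exp (-y) * exp (-y) * (K * (L (-1) - 1)) := by gcongr
      _ ≤ exp (-y) * 1 * (K * (L (-1) - 1)) := by gcongr
      _ = exp (-y) * (L (-1) - 1) * K := by ring
  rw [barrier]
  have : 0 ≤ exp (-2 * y) / K := by positivity
  nlinarith

end Laplace

section Quadrant

open Real

variable {μ : ℤ × ℤ → ℝ≥0∞}

lemma ne_top_of_H3 (h3 : H3 μ) (s : ℤ × ℤ) : μ s ≠ ⊤ := by
  have h0 : jumpGF μ 0 = ∑' s, μ s := by simp [jumpGF, dot]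
  exact ENNReal.ne_top_of_tsum_ne_top (h0 ▸ (h3 0).ne) s

lemma exp_dot_add (b : ℝ × ℝ) (u s : ℤ × ℤ) :
    exp (dot b (toR (u + s))) = exp (dot b (toR u)) * exp (dot b (toR s)) := by
  rw [← exp_add]
  simp only [dot, toR, Prod.fst_add, Prod.snd_add, Int.cast_add]
  ring_nf

lemma exp_dot_add_vert (a : ℝ × ℝ) (t : ℝ) (s : ℤ × ℤ) :
    exp (dot (a + (0, t)) (toR s)) = exp (dot a (toR s)) * exp (t * s.2) := by
  rw [← exp_add]
  simp only [dot, toR, Prod.fst_add, Prod.snd_add]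
  ring_nf

lemma hasSum_toReal_jumpGF (h3 : H3 μ) (b : ℝ × ℝ) :
    HasSum (fun s => (μ s).toReal * exp (dot b (toR s))) (jumpGF μ b).toReal := by
  have hfin := (h3 b).ne
  rw [jumpGF, ENNReal.tsum_toReal_eq (ENNReal.ne_top_of_tsum_ne_top hfin)]
  simpa only [ENNReal.toReal_mul, ENNReal.toReal_ofReal (exp_pos _).le] using
    (ENNReal.summable_toReal hfin).hasSum

lemma hasSum_shift_mul_exp {a : ℝ × ℝ} {F : ℝ → ℝ} (v : ℤ × ℤ) {S : ℝ}
    (hS : HasSum (fun s => (μ s).toReal * exp (dot a (toR s)) * F (v.2 + s.2)) S) :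
    HasSum (fun w => (μ (w - v)).toReal * (F w.2 * exp (dot a (toR w))))
      (exp (dot a (toR v)) * S) := by
  have hshift : (fun w => (μ (w - v)).toReal * (F w.2 * exp (dot a (toR w)))) ∘ Equiv.addLeft v =
      fun s => exp (dot a (toR v)) * ((μ s).toReal * exp (dot a (toR s)) * F (v.2 + s.2)) := by
    ext s
    simp only [Function.comp_apply, Equiv.coe_addLeft, add_sub_cancel_left, exp_dot_add,
      Prod.snd_add, Int.cast_add]
    ring
  rw [← (Equiv.addLeft v).hasSum_iff, hshift]
  exact hS.mul_left _

theorem Eexit_quadrant_mul_exp_le (h3 : H3 μ) {a : ℝ × ℝ} {z : ℤ × ℤ} (hz : z ∈ quadrant)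
    {F : ℝ → ℝ} (hF : ∀ y, 0 ≤ y → 0 ≤ F y)
    (hsup : ∀ y, 0 ≤ y →
      ∃ S ≤ F y, HasSum (fun s => (μ s).toReal * exp (dot a (toR s)) * F (y + s.2)) S) :
    Eexit μ quadrant z (fun w => ENNReal.ofReal (F w.2 * exp (dot a (toR w)))) ≤
      ENNReal.ofReal (F z.2 * exp (dot a (toR z))) +
        Eexit μ quadrant z (fun w => ENNReal.ofReal (-(F w.2 * exp (dot a (toR w))))) := by
  have hpos {w : ℤ × ℤ} (hw : w ∈ quadrant) : (0 : ℝ) ≤ w.2 := by exact_mod_cast hw.2.le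
  refine Eexit_ofReal_le (ne_top_of_H3 h3) hz
    (fun w hw => mul_nonneg (hF _ (hpos hw)) (exp_pos _).le) fun v hv => ?_
  obtain ⟨S, hS, hsum⟩ := hsup v.2 (hpos hv)
  refine ⟨_, ?_, hasSum_shift_mul_exp v hsum⟩
  rw [mul_comm]
  exact mul_le_mul_of_nonneg_right hS (exp_pos _).le

theorem summable_and_tsum_exitK_mul_le (h3 : H3 μ) {a : ℝ × ℝ} (ha : jumpGF μ a = 1)
    (hvert : ∀ t ≠ 0, 1 < jumpGF μ (a + (0, t))) {z : ℤ × ℤ} (hz : z ∈ quadrant) :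
    Summable (fun w => (exitK μ quadrant z w).toReal * |(w.2 : ℝ) * exp (dot a (toR w))|) ∧
      ∑' w, (exitK μ quadrant z w).toReal * ((w.2 : ℝ) * exp (dot a (toR w))) ≤
        z.2 * exp (dot a (toR z)) := by
  set p := fun s : ℤ × ℤ => (μ s).toReal * exp (dot a (toR s))
  set L := fun t : ℝ => (jumpGF μ (a + (0, t))).toReal
  have hL (t : ℝ) : HasSum (fun s => p s * exp (t * s.2)) (L t) := by
    have := hasSum_toReal_jumpGF h3 (a + (0, t))
    simp_rw [exp_dot_add_vert, ← mul_assoc] at this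
    exact this
  have hL0 : L 0 = 1 := by simp [L, Prod.mk_zero_zero, ha]
  have hLgt (t : ℝ) (ht : t ≠ 0) : 1 < L t := by
    simpa using ENNReal.toReal_strict_mono (h3 _).ne (hvert t ht)
  have hp : HasSum p 1 := by simpa [hL0] using hL 0
  have hmean := hasSum_mul_eq_zero_of_isMinOn (fun s => by positivity) hL
    (isMinOn_univ_iff.2 fun t => by
      rcases eq_or_ne t 0 with rfl | ht <;> [rfl; exact (hL0 ▸ hLgt t ht).le])
  obtain ⟨K, hK, hbarrier⟩ := exists_barrier_superharmonic hL hL0 (hLgt _ (by norm_num))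
    (zero_le_one.trans (hLgt _ (by norm_num)).le)
  have hbound := Eexit_quadrant_mul_exp_le h3 hz (fun y _ => barrier_nonneg hK y) hbarrier
  have hsuper := Eexit_quadrant_mul_exp_le h3 hz (F := fun y => y) (fun _ hy => hy)
    fun y _ => ⟨y, le_rfl, hasSum_mul_add hp hmean y⟩
  have hneg_ne_top :
      Eexit μ quadrant z (fun w => ENNReal.ofReal (-((w.2 : ℝ) * exp (dot a (toR w))))) ≠ ⊤ := by
    refine ne_top_of_le_ne_top (ENNReal.add_ne_top.2 ⟨ENNReal.ofReal_ne_top, ?_⟩)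
      ((Eexit_mono fun w => ENNReal.ofReal_le_ofReal ?_).trans hbound)
    · simp [Eexit, ENNReal.ofReal_eq_zero.2, barrier_nonneg hK, (exp_pos _).le, mul_nonneg]
    · rw [← neg_mul]
      exact mul_le_mul_of_nonneg_right (neg_le_barrier hK _) (exp_pos _).le
  exact summable_abs_and_tsum_le (by have := hz.2; positivity) hneg_ne_top hsuper

end Quadrant

theorem h_a10_well_defined_nonneg_general
    (μ : ℤ × ℤ → ℝ≥0∞) (h3 : H3 μ)
    (aOf : ℝ × ℝ → ℝ × ℝ) (haOf : IsDirMap μ aOf) :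
    ∀ z ∈ quadrant,
      Summable (fun w : ℤ × ℤ =>
        (exitK μ quadrant z w).toReal *
          |(w.2 : ℝ) * Real.exp (dot (aOf ((1 : ℝ), (0 : ℝ))) (toR w))|) ∧
      0 ≤ (z.2 : ℝ) * Real.exp (dot (aOf ((1 : ℝ), (0 : ℝ))) (toR z)) -
        EexitR μ quadrant z
          (fun w => (w.2 : ℝ) * Real.exp (dot (aOf ((1 : ℝ), (0 : ℝ))) (toR w))) := by
  intro z hz
  obtain ⟨hone, hmax⟩ := haOf (1, 0) (by simp)
  have hvert (t : ℝ) (ht : t ≠ 0) : 1 < jumpGF μ (aOf (1, 0) + (0, t)) := by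
    by_contra! hle
    have := hmax _ hle (by simpa using ht)
    simp [dot] at this
  obtain ⟨hsum, hle⟩ := summable_and_tsum_exitK_mul_le h3 hone hvert hz
  exact ⟨hsum, sub_nonneg.2 hle⟩

/-- **Lemma 4.2.**  Under (H1) and (H3), the function
`z = (x₁,x₂) ↦ x₂ exp(a(1,0)·z) − E_z(S₂(τ) exp(a(1,0)·S(τ)); τ < ∞)` is well defined
(the expectation converges absolutely) and nonnegative on `ℕ*×ℕ*`. -/
theorem h_a10_well_defined_nonneg
    (μ : ℤ × ℤ → ℝ≥0∞) (hprob : ∑' z : ℤ × ℤ, μ z = 1)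
    (h1 : H1 μ) (h3 : H3 μ)
    (aOf : ℝ × ℝ → ℝ × ℝ) (haOf : IsDirMap μ aOf) :
    ∀ z ∈ quadrant,
      Summable (fun w : ℤ × ℤ =>
        (exitK μ quadrant z w).toReal *
          |(w.2 : ℝ) * Real.exp (dot (aOf ((1 : ℝ), (0 : ℝ))) (toR w))|) ∧
      0 ≤ (z.2 : ℝ) * Real.exp (dot (aOf ((1 : ℝ), (0 : ℝ))) (toR z)) -
        EexitR μ quadrant z
          (fun w => (w.2 : ℝ) * Real.exp (dot (aOf ((1 : ℝ), (0 : ℝ))) (toR w))) :=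
  h_a10_well_defined_nonneg_general μ h3 aOf haOf

end KRWQ
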